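/- If the operation Justify(J, v, dj) is executable, then the justification it returns is a safe justification. -/

import Mathlib

attribute [local instance] Classical.propDecidable

open Fin.NatCast

noncomputable section

/-- A parity game: an edge relation `E`, an owner function, a priority
function; every node has at least one outgoing edge. -/
structure ParityGame (V : Type*) where
  E : V → V → Prop
  owner : V → Fin 2
  pr : V → ℕ
  exists_succ : ∀ v, ∃ w, E v w

namespace ParityGame

variable {V : Type*}

/-- An infinite sequence of nodes following the relation `R`. -/
def IsInfPath (R : V → V → Prop) (π : ℕ → V) : Prop :=
  ∀ i, R (π i) (π (i + 1))

/-- `ρ 0, …, ρ n` is a finite sequence of nodes following `R`. -/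
def IsFinPath (R : V → V → Prop) (ρ : ℕ → V) (n : ℕ) : Prop :=
  ∀ i < n, R (ρ i) (ρ (i + 1))

/-- A cycle following `R`: a nonempty finite path ending in its starting node. -/
def IsCycle (R : V → V → Prop) (ρ : ℕ → V) (n : ℕ) : Prop :=
  0 < n ∧ IsFinPath R ρ n ∧ ρ n = ρ 0

/-- `w` is reachable from `v` following `R` (in zero or more steps). -/
def Reaches (R : V → V → Prop) (v w : V) : Prop :=
  Relation.ReflTransGen R v w

/-- The infinite play `π` is won by player `α`: the highest priority
occurring infinitely often in the play has parity `α`. -/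
def InfWonBy (G : ParityGame V) (π : ℕ → V) (α : Fin 2) : Prop :=
  ∃ p : ℕ, {i | G.pr (π i) = p}.Infinite ∧
    (∀ q : ℕ, {i | G.pr (π i) = q}.Infinite → q ≤ p) ∧ (p : Fin 2) = α

/-- A play is consistent with a (partial, memoryless) strategy given as a set
of edges: whenever the play is at a node where the strategy selects an edge,
the play follows that edge. -/
def Consistent (σ : V → V → Prop) (π : ℕ → V) : Prop :=
  ∀ i u, σ (π i) u → π (i + 1) = u

/-- Consistency of a finite play `ρ 0, …, ρ n` with a strategy. -/
def ConsistentFin (σ : V → V → Prop) (ρ : ℕ → V) (n : ℕ) : Prop :=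
  ∀ i < n, ∀ u, σ (ρ i) u → ρ (i + 1) = u

/-- The default hypothesis: each node is won by the parity of its priority. -/
def Hd (G : ParityGame V) (v : V) : Fin 2 := (G.pr v : Fin 2)

/-- `dj` is a direct justification for player `α` to win node `v`: a set
containing exactly one outgoing edge of `v` if `α` owns `v`, and all outgoing
edges of `v` otherwise. -/
def IsDJ (G : ParityGame V) (v : V) (α : Fin 2) (dj : Set (V × V)) : Prop :=
  (G.owner v = α → ∃ w, G.E v w ∧ dj = {(v, w)}) ∧
  (G.owner v ≠ α → dj = {p | p.1 = v ∧ G.E v p.2})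

/-- `dj` wins `v` for `α` under hypothesis `H`. -/
def WinsDJ (G : ParityGame V) (H : V → Fin 2) (v : V) (α : Fin 2)
    (dj : Set (V × V)) : Prop :=
  G.IsDJ v α dj ∧ ∀ p ∈ dj, H p.2 = α

/-- The parity game obtained from `G` and the parameter function `P` by
replacing, in every parameter `v`, the outgoing edges of `v` by the self-loop
`(v, v)` and the priority of `v` by its assigned winner `P v`. -/
def paramGame (G : ParityGame V) (P : V → Option (Fin 2)) : ParityGame V where
  E := fun v w => if P v = none then G.E v w else w = v
  owner := G.owner
  pr := fun v => (P v).elim (G.pr v) Fin.val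
  exists_succ := fun v => by
    by_cases h : P v = none
    · obtain ⟨w, hw⟩ := G.exists_succ v
      exact ⟨w, by simp [h, hw]⟩
    · exact ⟨v, by simp [h]⟩

/-- A justification for `G`: a subgraph `D` together with a hypothesis `H`. -/
structure Justification (G : ParityGame V) where
  D : V → V → Prop
  H : V → Fin 2

variable {G : ParityGame V}

namespace Justification

/-- `v` is justified in `J`: it has an outgoing edge in `D`. -/
def Justified (J : Justification G) (v : V) : Prop := ∃ w, J.D v w

/-- The set of outgoing edges of `v` in `D`. -/
def outEdges (J : Justification G) (v : V) : Set (V × V) :=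
  {p | p.1 = v ∧ J.D v p.2}

/-- `J` is weakly winning: the outgoing edges of every justified node `v`
form a direct justification winning `v` for `H v` under `H`. -/
def WeaklyWinning (J : Justification G) : Prop :=
  ∀ v, J.Justified v → G.WinsDJ J.H v (J.H v) (J.outEdges v)

/-- `J` is winning: weakly winning, and every infinite path in `D` is a play
of `G` won by the hypothetical winner of its nodes. -/
def Winning (J : Justification G) : Prop :=
  J.WeaklyWinning ∧
    ∀ π : ℕ → V, IsInfPath J.D π → G.InfWonBy π (J.H (π 0))

/-- The parameter function `P_J`: the restriction of `H` to the unjustified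
nodes of `J`. -/
def param (J : Justification G) (v : V) : Option (Fin 2) :=
  if J.Justified v then none else some (J.H v)

/-- The strategy `σ_{J,α}`: the set of edges `(v, w) ∈ D` with
`O v = H v = α`. -/
def strat (J : Justification G) (α : Fin 2) : V → V → Prop :=
  fun v w => J.D v w ∧ G.owner v = α ∧ J.H v = α

/-- `Par_J v`: the parameters (unjustified nodes) reachable from `v` in `D`. -/
def Par (J : Justification G) (v : V) : Set V :=
  {w | Reaches J.D v w ∧ ¬ J.Justified w}

/-- The justification level of `v`: the minimal priority of a parameter
reachable from `v`, and `⊤` (`+∞`) if there is none. -/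
def jl (J : Justification G) (v : V) : ℕ∞ :=
  sInf ((fun w => (G.pr w : ℕ∞)) '' J.Par v)

/-- The justification level of a direct justification: the minimum of the
justification levels of the targets of its edges. -/
def jlDJ (J : Justification G) (dj : Set (V × V)) : ℕ∞ :=
  sInf ((fun p : V × V => J.jl p.2) '' dj)

/-- `J` is safe: winning, unjustified nodes have their default winner as
hypothesis, and the justification level of every node is at least its
priority. -/
def Safe (J : Justification G) : Prop :=
  J.Winning ∧ (∀ v, ¬ J.Justified v → J.H v = G.Hd v) ∧
    ∀ v, (G.pr v : ℕ∞) ≤ J.jl v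

/-- `J[v : dj, α]`: replace the outgoing `D`-edges of `v` by `dj` and set
`H v := α`. -/
def update (J : Justification G) (v : V) (dj : Set (V × V)) (α : Fin 2) :
    Justification G where
  D := fun x y => if x = v then (x, y) ∈ dj else J.D x y
  H := fun x => if x = v then α else J.H x

/-- `J[v : ∅, Hf v | v ∈ S]`: remove the direct justification of every
`v ∈ S` and set `H v := Hf v`. -/
def resetAll (J : Justification G) (S : Set V) (Hf : V → Fin 2) :
    Justification G where
  D := fun x y => if x ∈ S then False else J.D x y
  H := fun x => if x ∈ S then Hf x else J.H x

/-- `s_i(J)`: the number of justified nodes of justification level `i`. -/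
def size (J : Justification G) (i : ℕ∞) : ℕ :=
  {v | J.Justified v ∧ J.jl v = i}.ncard

end Justification

/-- The preconditions of the operation `Justify(J, v, dj)`. -/
def Executable (G : ParityGame V) (J : Justification G) (v : V)
    (dj : Set (V × V)) : Prop :=
  J.Safe ∧ (∃ α, G.WinsDJ J.H v α dj) ∧
    (if J.Justified v then J.jl v < J.jlDJ dj else J.jl v ≤ J.jlDJ dj)

/-- The operation `Justify(J, v, dj)`, where `α` is the player winning `v`
by `dj`: if `H v = α` this is `J[v : dj, α]`; otherwise all nodes reaching
`v` in `D` are reset to their default winner and then `v` gets `dj`. -/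
def justify (G : ParityGame V) (J : Justification G) (v : V)
    (dj : Set (V × V)) (α : Fin 2) : Justification G :=
  if J.H v = α then J.update v dj α
  else (J.resetAll {w | Reaches J.D w v} G.Hd).update v dj α

/-- The empty justification `(V, ∅, H_d)`. -/
def Justification.empty (G : ParityGame V) : Justification G :=
  ⟨fun _ _ => False, G.Hd⟩

/-!
When `H v = α`, `Justify` is the update `J[v : dj, α]`. A parameter reached through the new
edges of `v` lies at level at least `jl(dj) ≥ jl(v) ≥ pr(v)`, so levels stay above priorities.
A new infinite path either leaves `v` for good, and then its tail is a path of `J`, or returns to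
`v` infinitely often. The latter contradicts `jl(v) < jl(dj)` if `v` was justified; otherwise `v`
is a parameter of every node recurring on the path, so safety makes `pr(v)` the highest recurring
priority, of parity `H_d(v) = α`.

When `H v ≠ α`, resetting the set `S` of nodes reaching `v` keeps `J` safe because `S` is closed
under predecessors. The targets of `dj` lie outside `S`, since their hypothesis is `α`. After the
reset `v` is a parameter without predecessors, and the first case applies.
-/

theorem le_of_ite_lt_le {β : Type*} [Preorder β] {p : Prop} [Decidable p] {a b : β}
    (h : if p then a < b else a ≤ b) : a ≤ b := by
  split_ifs at h
  exacts [h.le, h]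

theorem infinite_setOf_add_iff {P : ℕ → Prop} (k : ℕ) :
    {i | P (i + k)}.Infinite ↔ {i | P i}.Infinite := by
  simp only [← Nat.frequently_atTop_iff_infinite, ← Filter.frequently_map (m := (· + k)),
    Filter.map_add_atTop_eq_nat]

theorem exists_infinite_visits_of_infinite_comp {β : Type*} [Finite V] (f : V → β) {π : ℕ → V}
    {b : β} (h : {i | f (π i) = b}.Infinite) : ∃ u, f u = b ∧ {i | π i = u}.Infinite := by
  by_contra! hfin
  exact h ((Set.toFinite {u | f u = b}).preimage' hfin)

theorem Reaches.mem_of_mem {R : V → V → Prop} {S : Set V} (hS : ∀ x y, R x y → y ∈ S → x ∈ S)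
    {x y : V} (h : Reaches R x y) (hy : y ∈ S) : x ∈ S := by
  induction h using Relation.ReflTransGen.head_induction_on with
  | refl => exact hy
  | head e _ ih => exact hS _ _ e ih

section InfPath

variable {R R' : V → V → Prop} {π : ℕ → V} {v : V}

theorem IsInfPath.reaches_of_eq_add (hR : ∀ x y, x ≠ v → R' x y → R x y)
    (hπ : IsInfPath R' π) : ∀ n i, π (i + n) = v → Reaches R (π i) v
  | 0, i, h => h ▸ Relation.ReflTransGen.refl
  | n + 1, i, h => by
    by_cases hi : π i = v
    · exact hi ▸ Relation.ReflTransGen.refl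
    · refine .head (hR _ _ hi (hπ i)) (hπ.reaches_of_eq_add hR n (i + 1) ?_)
      rwa [Nat.add_right_comm, Nat.add_assoc]

theorem IsInfPath.reaches_of_infinite_visits (hR : ∀ x y, x ≠ v → R' x y → R x y)
    (hπ : IsInfPath R' π) (hinf : {i | π i = v}.Infinite) (i : ℕ) : Reaches R (π i) v := by
  obtain ⟨j, hj : π j = v, hij⟩ := hinf.exists_gt i
  exact hπ.reaches_of_eq_add hR (j - i) i (by rwa [Nat.add_sub_cancel' hij.le])

theorem IsInfPath.tail_of_finite_visits (hR : ∀ x y, x ≠ v → R' x y → R x y)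
    (hπ : IsInfPath R' π) (hfin : {i | π i = v}.Finite) :
    ∃ N, π N ≠ v ∧ IsInfPath R (fun i => π (i + N)) := by
  obtain ⟨N, hN⟩ := hfin.bddAbove
  have hne : ∀ i, π (i + (N + 1)) ≠ v := fun i hi => by have := hN hi; omega
  refine ⟨N + 1, by simpa using hne 0, fun i => ?_⟩
  have := hR _ _ (hne i) (hπ (i + (N + 1)))
  rwa [Nat.add_right_comm] at this

end InfPath

theorem InfWonBy.of_add {π : ℕ → V} {α : Fin 2} {k : ℕ}
    (h : G.InfWonBy (fun i => π (i + k)) α) : G.InfWonBy π α := by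
  obtain ⟨p, hp, hmax, hα⟩ := h
  exact ⟨p, (infinite_setOf_add_iff k).1 hp,
    fun q hq => hmax q ((infinite_setOf_add_iff k).2 hq), hα⟩

theorem IsDJ.fst_eq {v : V} {α : Fin 2} {dj : Set (V × V)} (h : G.IsDJ v α dj)
    {p : V × V} (hp : p ∈ dj) : p.1 = v := by
  by_cases ho : G.owner v = α
  · obtain ⟨w, -, rfl⟩ := h.1 ho
    rw [Set.mem_singleton_iff.1 hp]
  · rw [h.2 ho] at hp
    exact hp.1

theorem IsDJ.nonempty {v : V} {α : Fin 2} {dj : Set (V × V)} (h : G.IsDJ v α dj) :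
    dj.Nonempty := by
  by_cases ho : G.owner v = α
  · obtain ⟨w, -, rfl⟩ := h.1 ho
    exact Set.singleton_nonempty _
  · obtain ⟨w, hw⟩ := G.exists_succ v
    rw [h.2 ho]
    exact ⟨(v, w), rfl, hw⟩

namespace Justification

variable {J : Justification G} {S : Set V} {Hf : V → Fin 2} {v x y u : V}
  {dj : Set (V × V)} {α : Fin 2}

theorem WeaklyWinning.H_eq_of_D (hJ : J.WeaklyWinning) (h : J.D x y) : J.H y = J.H x :=
  (hJ x ⟨y, h⟩).2 (x, y) ⟨rfl, h⟩

theorem WeaklyWinning.H_eq_of_reaches (hJ : J.WeaklyWinning) (h : Reaches J.D x y) :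
    J.H y = J.H x := by
  induction h with
  | refl => rfl
  | tail _ e ih => exact (hJ.H_eq_of_D e).trans ih

theorem WeaklyWinning.H_eq_of_isInfPath (hJ : J.WeaklyWinning) {π : ℕ → V}
    (hπ : IsInfPath J.D π) : ∀ k, J.H (π k) = J.H (π 0)
  | 0 => rfl
  | k + 1 => (hJ.H_eq_of_D (hπ k)).trans (hJ.H_eq_of_isInfPath hπ k)

theorem le_jl_iff {c : ℕ∞} : c ≤ J.jl x ↔ ∀ u ∈ J.Par x, c ≤ G.pr u := by
  simp only [jl, le_sInf_iff, Set.forall_mem_image]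

theorem jl_le_pr (hu : u ∈ J.Par x) : J.jl x ≤ G.pr u :=
  sInf_le ⟨u, hu, rfl⟩

theorem jl_le_jl_of_reaches (h : Reaches J.D x y) : J.jl x ≤ J.jl y :=
  le_jl_iff.2 fun _ hu => jl_le_pr ⟨h.trans hu.1, hu.2⟩

theorem le_jlDJ_iff {c : ℕ∞} : c ≤ J.jlDJ dj ↔ ∀ p ∈ dj, c ≤ J.jl p.2 := by
  simp only [jlDJ, le_sInf_iff, Set.forall_mem_image]

theorem jlDJ_le_jl {p : V × V} (hp : p ∈ dj) : J.jlDJ dj ≤ J.jl p.2 :=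
  sInf_le ⟨p, hp, rfl⟩

theorem Safe.pr_le_pr (hJ : J.Safe) (hu : u ∈ J.Par x) : G.pr x ≤ G.pr u := by
  exact_mod_cast (hJ.2.2 x).trans (jl_le_pr hu)

@[simp] theorem update_D_self : (J.update v dj α).D v y ↔ (v, y) ∈ dj := by
  simp [update]

@[simp] theorem update_D_of_ne (hx : x ≠ v) : (J.update v dj α).D x y ↔ J.D x y := by
  simp [update, hx]

@[simp] theorem update_H_self : (J.update v dj α).H v = α := by
  simp [update]

@[simp] theorem update_H_of_ne (hx : x ≠ v) : (J.update v dj α).H x = J.H x := by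
  simp [update, hx]

theorem justified_update_self (hdj : G.IsDJ v α dj) : (J.update v dj α).Justified v := by
  obtain ⟨p, hp⟩ := hdj.nonempty
  exact ⟨p.2, update_D_self.2 (hdj.fst_eq hp ▸ hp)⟩

theorem justified_update_iff_of_ne (hx : x ≠ v) :
    (J.update v dj α).Justified x ↔ J.Justified x := by
  simp only [Justified, update_D_of_ne hx]

theorem update_outEdges_self (hdj : G.IsDJ v α dj) : (J.update v dj α).outEdges v = dj := by
  ext ⟨a, b⟩
  refine ⟨fun ⟨ha, h⟩ => ?_, fun h => ⟨hdj.fst_eq h, ?_⟩⟩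
  · subst ha
    exact update_D_self.1 h
  · exact update_D_self.2 (hdj.fst_eq h ▸ h)

theorem update_outEdges_of_ne (hx : x ≠ v) :
    (J.update v dj α).outEdges x = J.outEdges x := by
  ext p
  simp only [outEdges, Set.mem_ofPred_eq, update_D_of_ne hx]

theorem reaches_update (h : Reaches (J.update v dj α).D x u) :
    Reaches J.D x u ∨ Reaches J.D x v ∧ ∃ p ∈ dj, Reaches J.D p.2 u := by
  induction h using Relation.ReflTransGen.head_induction_on with
  | refl => exact Or.inl .refl
  | @head a c e _ ih =>
    by_cases hav : a = v
    · rw [hav, update_D_self] at e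
      refine Or.inr ⟨hav ▸ .refl, ?_⟩
      rcases ih with hcu | ⟨-, hp⟩
      exacts [⟨_, e, hcu⟩, hp]
    · have e : J.D a c := (update_D_of_ne hav).1 e
      exact ih.imp (.head e) (And.imp_left (.head e))

theorem H_eq_of_update_D (hwin : G.WinsDJ J.H v α dj) (hpred : ∀ x, J.D x v → J.H v = α)
    (h : (J.update v dj α).D x v) : J.H v = α := by
  by_cases hxv : x = v
  · rw [hxv, update_D_self] at h
    exact hwin.2 _ h
  · exact hpred x ((update_D_of_ne hxv).1 h)

theorem WeaklyWinning.update (hJ : J.WeaklyWinning) (hwin : G.WinsDJ J.H v α dj)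
    (hpred : ∀ x, J.D x v → J.H v = α) : (J.update v dj α).WeaklyWinning := by
  intro x hx
  by_cases hxv : x = v
  · subst hxv
    rw [update_outEdges_self hwin.1, update_H_self]
    refine ⟨hwin.1, fun p hp => ?_⟩
    by_cases hpv : p.2 = x
    · rw [hpv, update_H_self]
    · rw [update_H_of_ne hpv]
      exact hwin.2 p hp
  · have hxJ : J.Justified x := (justified_update_iff_of_ne hxv).1 hx
    rw [update_outEdges_of_ne hxv, update_H_of_ne hxv]
    refine ⟨(hJ x hxJ).1, fun p hp => ?_⟩
    by_cases hpv : p.2 = v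
    · have hxv' : J.D x v := hpv ▸ hp.2
      rw [hpv, update_H_self, ← hpred x hxv']
      exact hJ.H_eq_of_D hxv'
    · rw [update_H_of_ne hpv]
      exact (hJ x hxJ).2 p hp

theorem jlDJ_le_jl_of_infinite_visits {π : ℕ → V} (hπ : IsInfPath (J.update v dj α).D π)
    (hinf : {i | π i = v}.Infinite) : J.jlDJ dj ≤ J.jl v := by
  obtain ⟨i, hi : π i = v⟩ := hinf.nonempty
  have hdj : (v, π (i + 1)) ∈ dj := update_D_self.1 (hi ▸ hπ i)
  calc J.jlDJ dj ≤ J.jl (π (i + 1)) := jlDJ_le_jl hdj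
    _ ≤ J.jl v := jl_le_jl_of_reaches
        (hπ.reaches_of_infinite_visits (fun _ _ hx => (update_D_of_ne hx).1) hinf (i + 1))

/-- Every node recurring in `π` reaches the parameter `v`, so safety bounds its priority by
`pr v`. -/
theorem Safe.infWonBy_of_infinite_visits [Finite V] {R : V → V → Prop} {π : ℕ → V}
    (hJ : J.Safe) (hv : ¬ J.Justified v) (hR : ∀ x y, x ≠ v → R x y → J.D x y)
    (hπ : IsInfPath R π) (hinf : {i | π i = v}.Infinite) : G.InfWonBy π (G.Hd v) := by
  refine ⟨G.pr v, hinf.mono fun i (hi : π i = v) => congrArg G.pr hi, fun q hq => ?_, rfl⟩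
  obtain ⟨u, rfl, hu⟩ := exists_infinite_visits_of_infinite_comp G.pr hq
  obtain ⟨i, hi : π i = u⟩ := hu.nonempty
  exact hJ.pr_le_pr ⟨hi ▸ hπ.reaches_of_infinite_visits hR hinf i, hv⟩

theorem Safe.infWonBy_update [Finite V] (hJ : J.Safe) (hwin : G.WinsDJ J.H v α dj)
    (hlev : if J.Justified v then J.jl v < J.jlDJ dj else J.jl v ≤ J.jlDJ dj)
    (hpred : ∀ x, J.D x v → J.H v = α) {π : ℕ → V} (hπ : IsInfPath (J.update v dj α).D π) :
    G.InfWonBy π ((J.update v dj α).H (π 0)) := by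
  have hww := hJ.1.1.update hwin hpred
  have hR : ∀ x y, x ≠ v → (J.update v dj α).D x y → J.D x y :=
    fun _ _ hx => (update_D_of_ne hx).1
  by_cases hinf : {i | π i = v}.Infinite
  · obtain ⟨i, hi⟩ : ∃ i, π (i + 1) = v := by
      obtain ⟨j, hj : π j = v, hj0⟩ := hinf.exists_gt 0
      exact ⟨j - 1, by rwa [Nat.sub_add_cancel hj0]⟩
    have hvα : J.H v = α := H_eq_of_update_D hwin hpred (hi ▸ hπ i)
    rw [← hww.H_eq_of_isInfPath hπ (i + 1), hi, update_H_self, ← hvα]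
    split_ifs at hlev with hv
    · exact absurd hlev (jlDJ_le_jl_of_infinite_visits hπ hinf).not_gt
    · rw [hJ.2.1 v hv]
      exact hJ.infWonBy_of_infinite_visits hv hR hπ hinf
  · obtain ⟨N, hN, htail⟩ := hπ.tail_of_finite_visits hR (Set.not_infinite.1 hinf)
    have hwon := hJ.1.2 _ htail
    beta_reduce at hwon
    rw [zero_add, ← update_H_of_ne (dj := dj) (α := α) hN, hww.H_eq_of_isInfPath hπ N] at hwon
    exact hwon.of_add

theorem Safe.update [Finite V] (hJ : J.Safe) (hwin : G.WinsDJ J.H v α dj)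
    (hlev : if J.Justified v then J.jl v < J.jlDJ dj else J.jl v ≤ J.jlDJ dj)
    (hpred : ∀ x, J.D x v → J.H v = α) : (J.update v dj α).Safe := by
  have hunj : ∀ {x}, ¬ (J.update v dj α).Justified x → x ≠ v ∧ ¬ J.Justified x := by
    intro x hx
    have hxv : x ≠ v := by
      rintro rfl
      exact hx (justified_update_self hwin.1)
    exact ⟨hxv, (justified_update_iff_of_ne hxv).not.1 hx⟩
  refine ⟨⟨hJ.1.1.update hwin hpred, fun π hπ => hJ.infWonBy_update hwin hlev hpred hπ⟩,
    fun x hx => ?_, fun x => le_jl_iff.2 fun u ⟨hxu, hu⟩ => ?_⟩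
  · obtain ⟨hxv, hxJ⟩ := hunj hx
    rw [update_H_of_ne hxv]
    exact hJ.2.1 x hxJ
  · obtain ⟨-, huJ⟩ := hunj hu
    rcases reaches_update hxu with hxu | ⟨hxv, p, hp, hpu⟩
    · exact_mod_cast hJ.pr_le_pr ⟨hxu, huJ⟩
    · calc (G.pr x : ℕ∞) ≤ J.jl x := hJ.2.2 x
        _ ≤ J.jl v := jl_le_jl_of_reaches hxv
        _ ≤ J.jlDJ dj := le_of_ite_lt_le hlev
        _ ≤ J.jl p.2 := jlDJ_le_jl hp
        _ ≤ G.pr u := jl_le_pr ⟨hpu, huJ⟩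

@[simp] theorem resetAll_D : (J.resetAll S Hf).D x y ↔ x ∉ S ∧ J.D x y := by
  by_cases hx : x ∈ S <;> simp [resetAll, hx]

@[simp] theorem resetAll_H_of_mem (hx : x ∈ S) : (J.resetAll S Hf).H x = Hf x := by
  simp [resetAll, hx]

@[simp] theorem resetAll_H_of_notMem (hx : x ∉ S) : (J.resetAll S Hf).H x = J.H x := by
  simp [resetAll, hx]

theorem justified_resetAll_iff : (J.resetAll S Hf).Justified x ↔ x ∉ S ∧ J.Justified x := by
  simp only [Justified, resetAll_D, exists_and_left]

theorem resetAll_outEdges_of_notMem (hx : x ∉ S) :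
    (J.resetAll S Hf).outEdges x = J.outEdges x := by
  ext p
  simp only [outEdges, Set.mem_ofPred_eq, resetAll_D, hx, not_false_eq_true, true_and]

theorem par_resetAll_subset (hS : ∀ x y, J.D x y → y ∈ S → x ∈ S) (hx : x ∉ S) :
    (J.resetAll S Hf).Par x ⊆ J.Par x := by
  rintro u ⟨hxu, hu⟩
  have hxu : Reaches J.D x u := Relation.ReflTransGen.mono (fun _ _ h => (resetAll_D.1 h).2) _ _ hxu
  have huS : u ∉ S := fun huS => hx (hxu.mem_of_mem hS huS)
  exact ⟨hxu, fun h => hu (justified_resetAll_iff.2 ⟨huS, h⟩)⟩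

theorem eq_of_mem_par_resetAll (hx : x ∈ S) (hu : u ∈ (J.resetAll S Hf).Par x) : u = x := by
  rcases hu.1.cases_head with h | ⟨c, e, -⟩
  · exact h.symm
  · exact absurd hx (resetAll_D.1 e).1

theorem jl_le_jl_resetAll (hS : ∀ x y, J.D x y → y ∈ S → x ∈ S) (hx : x ∉ S) :
    J.jl x ≤ (J.resetAll S Hf).jl x :=
  sInf_le_sInf (Set.image_mono (par_resetAll_subset hS hx))

theorem Safe.resetAll (hJ : J.Safe) (hS : ∀ x y, J.D x y → y ∈ S → x ∈ S) :
    (J.resetAll S G.Hd).Safe := by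
  refine ⟨⟨fun x hx => ?_, fun π hπ => ?_⟩, fun x hx => ?_, fun x => le_jl_iff.2 fun u hu => ?_⟩
  · obtain ⟨hxS, hxJ⟩ := justified_resetAll_iff.1 hx
    rw [resetAll_outEdges_of_notMem hxS, resetAll_H_of_notMem hxS]
    refine ⟨(hJ.1.1 x hxJ).1, fun p hp => ?_⟩
    rw [resetAll_H_of_notMem fun h => hxS (hS _ _ hp.2 h)]
    exact (hJ.1.1 x hxJ).2 p hp
  · rw [resetAll_H_of_notMem (resetAll_D.1 (hπ 0)).1]
    exact hJ.1.2 π fun i => (resetAll_D.1 (hπ i)).2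
  · by_cases hxS : x ∈ S
    · exact resetAll_H_of_mem hxS
    · rw [resetAll_H_of_notMem hxS]
      exact hJ.2.1 x fun h => hx (justified_resetAll_iff.2 ⟨hxS, h⟩)
  · by_cases hxS : x ∈ S
    · rw [eq_of_mem_par_resetAll hxS hu]
    · exact_mod_cast hJ.pr_le_pr (par_resetAll_subset hS hxS hu)

end Justification

/-- if `Justify(J, v, dj)` is executable (`J` is safe, player
`α` wins `v` by `dj` under `H`, and `jl(dj) ≥ jl(v)` if `v` is unjustified
while `jl(dj) > jl(v)` if `v` is justified), then the returned justification
is safe. -/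
theorem stmt_12 {V : Type*} [Fintype V] {G : ParityGame V}
    (J : Justification G) (v : V) (dj : Set (V × V)) (α : Fin 2)
    (hsafe : J.Safe) (hwin : G.WinsDJ J.H v α dj)
    (hlev : if J.Justified v then J.jl v < J.jlDJ dj
            else J.jl v ≤ J.jlDJ dj) :
    (justify G J v dj α).Safe := by
  unfold justify
  split_ifs with hvα
  · exact hsafe.update hwin hlev fun _ _ => hvα
  set S := {w | Reaches J.D w v}
  have hS : ∀ x y, J.D x y → y ∈ S → x ∈ S := fun _ _ h hy => .head h hy
  have hvS : v ∈ S := .refl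
  have hdjS : ∀ p ∈ dj, p.2 ∉ S := fun p hp hpS =>
    hvα ((hsafe.1.1.H_eq_of_reaches hpS).trans (hwin.2 p hp))
  have hv : ¬ (J.resetAll S G.Hd).Justified v := fun h =>
    (Justification.justified_resetAll_iff.1 h).1 hvS
  refine (hsafe.resetAll hS).update ⟨hwin.1, fun p hp => ?_⟩ ?_ fun x hx => ?_
  · rw [Justification.resetAll_H_of_notMem (hdjS p hp)]
    exact hwin.2 p hp
  · rw [if_neg hv]
    calc (J.resetAll S G.Hd).jl v ≤ G.pr v := Justification.jl_le_pr ⟨.refl, hv⟩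
      _ ≤ J.jl v := hsafe.2.2 v
      _ ≤ J.jlDJ dj := le_of_ite_lt_le hlev
      _ ≤ (J.resetAll S G.Hd).jlDJ dj := Justification.le_jlDJ_iff.2 fun p hp =>
        (Justification.jlDJ_le_jl hp).trans (Justification.jl_le_jl_resetAll hS (hdjS p hp))
  · exact absurd (hS _ _ (Justification.resetAll_D.1 hx).2 hvS) (Justification.resetAll_D.1 hx).1

end ParityGame

end
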